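/- arXiv:2511.23212 — 5 statements merged into one kernel-verified Lean document; each statement's English description precedes it below -/
import Mathlib

section
/- (Knight's identity) For every τ ∈ (0,1) and all real numbers u, v, one has ρ_τ(u − v) − ρ_τ(u) = −v·ψ_τ(u) + ∫_0^v (1{u ≤ s} − 1{u ≤ 0}) ds, where the integral is the signed Lebesgue integral over the oriented interval from 0 to v. -/
open MeasureTheory intervalIntegral

/-- The pinball (check) loss `ρ_τ(u) = u (τ - 1{u < 0})`. -/
noncomputable def pinball (τ u : ℝ) : ℝ := u * (τ - if u < 0 then 1 else 0)

/-- The score function `ψ_τ(u) = τ - 1{u ≤ 0}`. -/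
noncomputable def score (τ u : ℝ) : ℝ := τ - if u ≤ 0 then 1 else 0

lemma step_mono (u : ℝ) : Monotone (fun s : ℝ => if u ≤ s then (1:ℝ) else 0) := by
  intro a b hab
  by_cases h : u ≤ a
  · simp [h, h.trans hab]
  · by_cases h' : u ≤ b <;> simp [h, h']

lemma step_intble (u a b : ℝ) :
    IntervalIntegrable (fun s : ℝ => if u ≤ s then (1:ℝ) else 0) volume a b :=
  (step_mono u).intervalIntegrable

lemma step_ae (u : ℝ) :
    (fun s : ℝ => if u ≤ s then (1:ℝ) else 0)
      =ᵐ[(volume : Measure ℝ)] fun s => if u < s then (1:ℝ) else 0 := by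
  have h : ∀ᵐ s ∂(volume : Measure ℝ), s ≠ u := by
    rw [ae_iff]
    simpa using Real.volume_singleton (a := u)
  filter_upwards [h] with s hs
  rcases lt_trichotomy u s with h1 | h1 | h1
  · simp [h1.le, h1]
  · exact absurd h1.symm hs
  · simp [not_le.mpr h1, h1.not_gt, not_le_of_gt h1]

lemma step_integral (u v : ℝ) :
    (∫ s in (0:ℝ)..v, (if u ≤ s then (1:ℝ) else 0)) = max (v - u) 0 - max (-u) 0 := by
  rcases le_or_gt u 0 with hu | hu
  · rcases le_or_gt u v with hv | hv
    · -- u ≤ 0, u ≤ v : integrand is 1 on the interval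
      have : (∫ s in (0:ℝ)..v, (if u ≤ s then (1:ℝ) else 0)) = ∫ _ in (0:ℝ)..v, (1:ℝ) := by
        apply intervalIntegral.integral_congr
        intro s hs
        have : u ≤ s := le_trans (le_min hu hv) hs.1
        simp [this]
      rw [this, intervalIntegral.integral_const]
      rw [max_eq_left (by linarith), max_eq_left (by linarith)]
      simp
    · -- v < u ≤ 0 : split at u
      have hsplit := intervalIntegral.integral_add_adjacent_intervals
        (step_intble u 0 u) (step_intble u u v)
      rw [← hsplit]
      have h1 : (∫ s in (0:ℝ)..u, (if u ≤ s then (1:ℝ) else 0)) = ∫ _ in (0:ℝ)..u, (1:ℝ) := by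
        apply intervalIntegral.integral_congr
        intro s hs
        have : u ≤ s := by
          rcases hs with ⟨h1, _⟩
          simpa [min_eq_right hu] using h1
        simp [this]
      have h2 : (∫ s in u..v, (if u ≤ s then (1:ℝ) else 0)) = 0 := by
        have e1 : (∫ s in u..v, (if u ≤ s then (1:ℝ) else 0)) =
            ∫ s in u..v, (if u < s then (1:ℝ) else 0) := by
          apply intervalIntegral.integral_congr_ae
          filter_upwards [step_ae u] with s hs _
          exact hs
        rw [e1]
        have e0 : (∫ s in u..v, (if u < s then (1:ℝ) else 0)) = ∫ _ in u..v, (0:ℝ) := by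
          apply intervalIntegral.integral_congr
          intro s hs
          have hs2 : s ≤ u := le_trans hs.2 (by simp [hv.le])
          simp [hs2.not_gt]
        rw [e0]; simp
      rw [h1, h2, intervalIntegral.integral_const]
      rw [max_eq_right (by linarith : v - u ≤ 0), max_eq_left (by linarith : (0:ℝ) ≤ -u)]
      simp
  · rcases le_or_gt v u with hv | hv
    · -- v ≤ u, 0 < u : integrand a.e. 0 on interval
      have : (∫ s in (0:ℝ)..v, (if u ≤ s then (1:ℝ) else 0)) =
          ∫ s in (0:ℝ)..v, (if u < s then (1:ℝ) else 0) := by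
        apply intervalIntegral.integral_congr_ae
        filter_upwards [step_ae u] with s hs _
        exact hs
      rw [this]
      have h0 : (∫ s in (0:ℝ)..v, (if u < s then (1:ℝ) else 0)) = ∫ _ in (0:ℝ)..v, (0:ℝ) := by
        apply intervalIntegral.integral_congr
        intro s hs
        have hs2 : s ≤ u := le_trans hs.2 (max_le hu.le hv)
        simp [hs2.not_gt]
      rw [h0]
      rw [max_eq_right (by linarith), max_eq_right (by linarith)]
      simp
    · -- 0 < u < v : split at u
      have hsplit := intervalIntegral.integral_add_adjacent_intervals
        (step_intble u 0 u) (step_intble u u v)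
      rw [← hsplit]
      have h1 : (∫ s in (0:ℝ)..u, (if u ≤ s then (1:ℝ) else 0)) = 0 := by
        have : (∫ s in (0:ℝ)..u, (if u ≤ s then (1:ℝ) else 0)) =
            ∫ s in (0:ℝ)..u, (if u < s then (1:ℝ) else 0) := by
          apply intervalIntegral.integral_congr_ae
          filter_upwards [step_ae u] with s hs _
          exact hs
        rw [this]
        have h0 : (∫ s in (0:ℝ)..u, (if u < s then (1:ℝ) else 0)) = ∫ _ in (0:ℝ)..u, (0:ℝ) := by
          apply intervalIntegral.integral_congr
          intro s hs
          have hs2 : s ≤ u := le_trans hs.2 (by simp [hu.le])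
          simp [hs2.not_gt]
        rw [h0]; simp
      have h2 : (∫ s in u..v, (if u ≤ s then (1:ℝ) else 0)) = ∫ _ in u..v, (1:ℝ) := by
        apply intervalIntegral.integral_congr
        intro s hs
        have : u ≤ s := le_trans (by simp [hv.le]) hs.1
        simp [this]
      rw [h1, h2, intervalIntegral.integral_const]
      rw [max_eq_left (by linarith), max_eq_right (by linarith)]
      simp

/-- Knight's identity:
`ρ_τ(u − v) − ρ_τ(u) = −v ψ_τ(u) + ∫_0^v (1{u ≤ s} − 1{u ≤ 0}) ds`. -/
theorem knight_identity (τ : ℝ) (hτ : τ ∈ Set.Ioo (0:ℝ) 1) (u v : ℝ) :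
    pinball τ (u - v) - pinball τ u =
      -v * score τ u +
        ∫ s in (0:ℝ)..v, ((if u ≤ s then (1:ℝ) else 0) - (if u ≤ 0 then (1:ℝ) else 0)) := by
  have hsub : (∫ s in (0:ℝ)..v, ((if u ≤ s then (1:ℝ) else 0) - (if u ≤ 0 then (1:ℝ) else 0)))
      = (∫ s in (0:ℝ)..v, (if u ≤ s then (1:ℝ) else 0)) - v * (if u ≤ 0 then (1:ℝ) else 0) := by
    rw [intervalIntegral.integral_sub (step_intble u 0 v) (intervalIntegrable_const),
      intervalIntegral.integral_const]
    simp [smul_eq_mul]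
  rw [hsub, step_integral]
  have hp : ∀ w : ℝ, pinball τ w = w * τ + max (-w) 0 := by
    intro w
    unfold pinball
    rcases lt_trichotomy w 0 with h | h | h
    · rw [if_pos h, max_eq_left (by linarith)]; ring
    · simp [h]
    · rw [if_neg h.not_gt, max_eq_right (by linarith)]; ring
  rw [hp, hp]
  unfold score
  have : max (-(u - v)) 0 = max (v - u) 0 := by ring_nf
  rw [this]
  ring
end

section
/- Let U be a real-valued random variable whose cumulative distribution function F(s) := P(U ≤ s) is Lipschitz continuous with constant C_f ≥ 0 (i.e., the density of U is bounded by C_f). Then for every δ ∈ ℝ, the Knight remainder W(δ) := ∫_0^δ (1{U ≤ z} − 1{U ≤ 0}) dz satisfies E[W(δ)²] ≤ C_f · |δ|³. -/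
open MeasureTheory Set

/-! Pointwise, `|W(δ)| ≤ ∫_{uIoc 0 δ} |1{U ≤ z} − 1{U ≤ 0}| dz ≤ |δ|`, so `W(δ)² ≤ |δ| · ∫_{uIoc 0 δ} |…| dz`.
Taking expectations and swapping the integrals, the inner expectation is `|F z − F 0|` because the two
sublevel sets are nested, and this is at most `C_f |z| ≤ C_f |δ|`. -/

section SquaredIntegral

variable {α β : Type*} [MeasurableSpace α] [MeasurableSpace β]
  (μ : Measure α) (ν : Measure β) [IsFiniteMeasure μ] [IsFiniteMeasure ν]

lemma sq_integral_le_measureReal_univ_mul_integral_abs {g : β → ℝ} (hg_abs : ∀ y, |g y| ≤ 1) :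
    (∫ y, g y ∂ν) ^ 2 ≤ ν.real univ * ∫ y, |g y| ∂ν := by
  have h_abs : |∫ y, g y ∂ν| ≤ ∫ y, |g y| ∂ν := abs_integral_le_integral_abs
  have h_univ : ∫ y, |g y| ∂ν ≤ ν.real univ := (le_abs_self _).trans <| by
    simpa using norm_integral_le_of_norm_le_const (μ := ν) (f := fun y => |g y|) (C := 1)
      (.of_forall fun y => by simpa using hg_abs y)
  have h_nonneg : 0 ≤ ∫ y, |g y| ∂ν := integral_nonneg fun y => abs_nonneg _
  rw [← sq_abs]
  nlinarith [abs_nonneg (∫ y, g y ∂ν)]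

lemma integral_sq_integral_le_of_abs_le_one {g : α → β → ℝ}
    (hg : Measurable (Function.uncurry g)) (hg_abs : ∀ x y, |g x y| ≤ 1) :
    ∫ x, (∫ y, g x y ∂ν) ^ 2 ∂μ ≤ ν.real univ * ∫ y, ∫ x, |g x y| ∂μ ∂ν := by
  have h_int : Integrable (Function.uncurry fun x y => |g x y|) (μ.prod ν) :=
    (integrable_const (1 : ℝ)).mono' hg.abs.aestronglyMeasurable
      (.of_forall fun ⟨x, y⟩ => by simpa using hg_abs x y)
  rw [← integral_integral_swap h_int, ← integral_const_mul]
  refine integral_mono_of_nonneg (.of_forall fun x => sq_nonneg _)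
    (h_int.integral_prod_left.const_mul _) (.of_forall fun x => ?_)
  exact sq_integral_le_measureReal_univ_mul_integral_abs ν (hg_abs x)

end SquaredIntegral

section Indicator

variable {Ω : Type*} [MeasurableSpace Ω] (μ : Measure Ω) [IsFiniteMeasure μ]

lemma integral_abs_indicator_sub_indicator {s t : Set Ω} (hs : MeasurableSet s)
    (ht : MeasurableSet t) (hst : s ⊆ t ∨ t ⊆ s) :
    ∫ ω, |t.indicator 1 ω - s.indicator 1 ω| ∂μ = |μ.real t - μ.real s| := by
  wlog h : s ⊆ t generalizing s t
  · simpa only [abs_sub_comm] using this ht hs hst.symm (hst.resolve_left h)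
  have h_diff : (fun ω => |t.indicator (1 : Ω → ℝ) ω - s.indicator 1 ω|) = (t \ s).indicator 1 := by
    ext ω
    rw [← Pi.sub_apply, ← indicator_sdiff h]
    exact abs_of_nonneg (indicator_nonneg (fun _ _ => zero_le_one) ω)
  rw [h_diff, integral_indicator_one (ht.diff hs), measureReal_sdiff h hs,
    abs_of_nonneg (sub_nonneg.2 (measureReal_mono h))]

lemma integral_abs_ite_le_sub_ite_le {U : Ω → ℝ} (hU : Measurable U) (y z : ℝ) :
    ∫ ω, |(if U ω ≤ z then (1 : ℝ) else 0) - (if U ω ≤ y then (1 : ℝ) else 0)| ∂μ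
      = |μ.real {ω | U ω ≤ z} - μ.real {ω | U ω ≤ y}| := by
  have h_sub (a b : ℝ) (hab : a ≤ b) : {ω | U ω ≤ a} ⊆ {ω | U ω ≤ b} := fun ω h => le_trans h hab
  simpa only [indicator_apply, mem_ofPred_eq, Pi.one_apply] using
    integral_abs_indicator_sub_indicator μ (measurableSet_le hU measurable_const)
      (measurableSet_le hU measurable_const)
      ((le_total y z).imp (h_sub y z) (h_sub z y))

end Indicator

/-- Second-moment bound for the Knight remainder: if the CDF of `U` is Lipschitz with
constant `C_f` (bounded density), then `E[W(δ)²] ≤ C_f |δ|³` where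
`W(δ) = ∫_0^δ (1{U ≤ z} − 1{U ≤ 0}) dz`. -/
theorem knight_remainder_second_moment
    {Ω : Type*} [MeasurableSpace Ω] (μ : Measure Ω) [IsProbabilityMeasure μ]
    (U : Ω → ℝ) (hU : Measurable U) (Cf : ℝ) (hCf : 0 ≤ Cf)
    (hLip : ∀ s t : ℝ, |(μ {ω | U ω ≤ t}).toReal - (μ {ω | U ω ≤ s}).toReal| ≤ Cf * |t - s|)
    (δ : ℝ) :
    (∫ ω, (∫ z in (0:ℝ)..δ,
        ((if U ω ≤ z then (1:ℝ) else 0) - (if U ω ≤ 0 then (1:ℝ) else 0))) ^ 2 ∂μ)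
      ≤ Cf * |δ| ^ 3 := by
  set f : Ω → ℝ → ℝ := fun ω z =>
    (if U ω ≤ z then (1 : ℝ) else 0) - (if U ω ≤ 0 then (1 : ℝ) else 0) with hf
  have hU_fst : Measurable fun p : Ω × ℝ => U p.1 := hU.comp measurable_fst
  have hf_meas : Measurable (Function.uncurry f) :=
    (Measurable.ite (measurableSet_le hU_fst measurable_snd) measurable_const measurable_const).sub
      (Measurable.ite (measurableSet_le hU_fst measurable_const) measurable_const measurable_const)
  have hf_abs : ∀ ω z, |f ω z| ≤ 1 := fun ω z => by simp only [hf]; split_ifs <;> norm_num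
  have h_vol : volume.real (uIoc (0 : ℝ) δ) = |δ| := by
    simp [measureReal_def, Real.volume_uIoc]
  have h_mean : ∀ z ∈ uIoc (0 : ℝ) δ, ‖∫ ω, |f ω z| ∂μ‖ ≤ Cf * |δ| := fun z hz => by
    rw [integral_abs_ite_le_sub_ite_le μ hU, Real.norm_eq_abs, abs_abs]
    calc _ ≤ Cf * |z - 0| := hLip 0 z
      _ ≤ Cf * |δ - 0| :=
        mul_le_mul_of_nonneg_left (abs_sub_left_of_mem_uIcc (uIoc_subset_uIcc hz)) hCf
      _ = Cf * |δ| := by rw [sub_zero]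
  have : IsFiniteMeasure (volume.restrict (uIoc (0 : ℝ) δ)) :=
    isFiniteMeasure_restrict.2 measure_Ioc_lt_top.ne
  calc ∫ ω, (∫ z in (0 : ℝ)..δ, f ω z) ^ 2 ∂μ
      = ∫ ω, (∫ z in uIoc (0 : ℝ) δ, f ω z) ^ 2 ∂μ := by
        congr 1
        ext ω
        rw [← sq_abs, intervalIntegral.abs_integral_eq_abs_integral_uIoc, sq_abs]
    _ ≤ |δ| * ∫ z in uIoc (0 : ℝ) δ, ∫ ω, |f ω z| ∂μ := by
        simpa [h_vol] using integral_sq_integral_le_of_abs_le_one μ (volume.restrict (uIoc 0 δ))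
          hf_meas hf_abs
    _ ≤ |δ| * ((Cf * |δ|) * |δ|) := by
        gcongr
        refine (le_abs_self _).trans ?_
        have h := norm_setIntegral_le_of_norm_le_const (μ := volume) (s := uIoc 0 δ)
          measure_Ioc_lt_top h_mean
        rwa [h_vol, Real.norm_eq_abs] at h
    _ = Cf * |δ| ^ 3 := by ring
end

section
/- (Gateaux derivative of the pinball risk) Let τ ∈ (0,1), and let W and H be real-valued random variables on a probability space with E[|H|] < ∞ and P(W = 0) = 0. Then the function φ(t) := E[ρ_τ(W − tH) − ρ_τ(W)] is well-defined and finite for all t ∈ ℝ, and φ is differentiable at t = 0 with φ'(0) = −E[ψ_τ(W)·H]. -/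
open MeasureTheory

/-!
Since `ρ_τ(u) = max (τ u) ((τ - 1) u)` is Lipschitz, the difference quotients of
`t ↦ ρ_τ(W - t H) - ρ_τ(W)` are dominated by a multiple of `|H|`; off the null set `{W = 0}`,
`ρ_τ` is linear near `W` with slope `ψ_τ(W)`. Differentiation under the integral sign
(dominated convergence) then gives `φ'(0) = -E[ψ_τ(W) H]`.
-/

open Filter Topology

lemma pinball_eq_max (τ u : ℝ) : pinball τ u = max (τ * u) ((τ - 1) * u) := by
  rcases lt_or_ge u 0 with hu | hu
  · rw [pinball, if_pos hu, max_eq_right (by nlinarith)]; ring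
  · rw [pinball, if_neg hu.not_gt, max_eq_left (by nlinarith)]; ring

lemma lipschitzWith_pinball (τ : ℝ) : LipschitzWith (max ‖τ‖₊ ‖τ - 1‖₊) (pinball τ) := by
  rw [show pinball τ = fun u => max (τ • u) ((τ - 1) • u) from funext (pinball_eq_max τ)]
  exact (lipschitzWith_smul τ).max (lipschitzWith_smul (τ - 1))

lemma measurable_score (τ : ℝ) : Measurable (score τ) :=
  measurable_const.sub (measurable_const.ite measurableSet_Iic measurable_const)

lemma pinball_eventuallyEq_mul_score {τ u : ℝ} (hu : u ≠ 0) :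
    pinball τ =ᶠ[𝓝 u] fun v => v * score τ u := by
  rcases hu.lt_or_gt with hu | hu
  · filter_upwards [Iio_mem_nhds hu] with v hv
    simp [pinball, score, Set.mem_Iio.mp hv, hu.le]
  · filter_upwards [Ioi_mem_nhds hu] with v hv
    simp [pinball, score, (Set.mem_Ioi.mp hv).not_gt, hu.not_ge]

lemma hasDerivAt_pinball {τ u : ℝ} (hu : u ≠ 0) : HasDerivAt (pinball τ) (score τ u) u :=
  (hasDerivAt_mul_const _).congr_of_eventuallyEq (pinball_eventuallyEq_mul_score hu)

section LipschitzRisk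

variable {Ω : Type*} [MeasurableSpace Ω] {μ : Measure Ω} {f : ℝ → ℝ} {K : NNReal}

lemma LipschitzWith.comp_sub_mul_sub (hf : LipschitzWith K f) (w h : ℝ) :
    LipschitzWith (K * ‖h‖₊) fun t => f (w - t * h) - f w := by
  refine LipschitzWith.of_dist_le_mul fun s t => ?_
  calc dist (f (w - s * h) - f w) (f (w - t * h) - f w)
      = dist (f (w - s * h)) (f (w - t * h)) := dist_sub_right _ _ _
    _ ≤ K * dist (w - s * h) (w - t * h) := hf.dist_le_mul _ _
    _ = K * ‖h‖₊ * dist s t := by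
      rw [dist_comm, Real.dist_eq, Real.dist_eq, mul_assoc, coe_nnnorm, Real.norm_eq_abs,
        ← abs_mul]
      ring_nf

lemma LipschitzWith.integrable_comp_sub_mul_sub (hf : LipschitzWith K f) {W H : Ω → ℝ}
    (hW : AEStronglyMeasurable W μ) (hH : Integrable H μ) (t : ℝ) :
    Integrable (fun ω => f (W ω - t * H ω) - f (W ω)) μ := by
  refine (hH.norm.const_mul (K * |t|)).mono' ?_ (.of_forall fun ω => ?_)
  · exact (hf.continuous.comp_aestronglyMeasurable (hW.sub (hH.aestronglyMeasurable.const_mul t))).sub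
      (hf.continuous.comp_aestronglyMeasurable hW)
  · simpa [mul_comm, mul_left_comm, abs_mul] using
      (hf.comp_sub_mul_sub (W ω) (H ω)).dist_le_mul t 0

theorem LipschitzWith.hasDerivAt_integral_comp_sub_mul_sub (hf : LipschitzWith K f)
    {f' : ℝ → ℝ} {W H : Ω → ℝ} (hW : AEStronglyMeasurable W μ)
    (hf' : AEStronglyMeasurable (fun ω => f' (W ω)) μ) (hH : Integrable H μ)
    (hderiv : ∀ᵐ ω ∂μ, HasDerivAt f (f' (W ω)) (W ω)) :
    HasDerivAt (fun t => ∫ ω, (f (W ω - t * H ω) - f (W ω)) ∂μ)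
      (-∫ ω, f' (W ω) * H ω ∂μ) 0 := by
  rw [← integral_neg]
  refine (hasDerivAt_integral_of_dominated_loc_of_lip (bound := fun ω => K * ‖H ω‖)
    univ_mem (.of_forall fun t => (hf.integrable_comp_sub_mul_sub hW hH t).aestronglyMeasurable)
    (hf.integrable_comp_sub_mul_sub hW hH 0) (hf'.mul hH.aestronglyMeasurable).neg
    (.of_forall fun ω => ?_) (hH.norm.const_mul K) ?_).2
  · rw [show Real.nnabs (K * ‖H ω‖) = K * ‖H ω‖₊ from NNReal.eq (by simp)]
    exact (hf.comp_sub_mul_sub (W ω) (H ω)).lipschitzOnWith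
  · filter_upwards [hderiv] with ω hω
    have hline : HasDerivAt (fun t : ℝ => W ω - t * H ω) (-H ω) 0 := by
      simpa using (hasDerivAt_mul_const (H ω)).const_sub (W ω)
    simpa [mul_neg] using ((hω.comp_of_eq 0 hline (by simp)).sub_const (f (W ω)))

end LipschitzRisk

theorem pinball_risk_gateaux_deriv_general
    {Ω : Type*} [MeasurableSpace Ω] (μ : Measure Ω)
    (τ : ℝ)
    (W H : Ω → ℝ) (hW : Measurable W)
    (hHint : Integrable H μ) (hW0 : μ {ω | W ω = 0} = 0) :
    (∀ t : ℝ, Integrable (fun ω => pinball τ (W ω - t * H ω) - pinball τ (W ω)) μ) ∧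
    HasDerivAt (fun t : ℝ => ∫ ω, (pinball τ (W ω - t * H ω) - pinball τ (W ω)) ∂μ)
      (-∫ ω, score τ (W ω) * H ω ∂μ) 0 := by
  have hderiv : ∀ᵐ ω ∂μ, HasDerivAt (pinball τ) (score τ (W ω)) (W ω) := by
    filter_upwards [measure_eq_zero_iff_ae_notMem.mp hW0] with ω hω using hasDerivAt_pinball hω
  exact ⟨(lipschitzWith_pinball τ).integrable_comp_sub_mul_sub hW.aestronglyMeasurable hHint,
    (lipschitzWith_pinball τ).hasDerivAt_integral_comp_sub_mul_sub hW.aestronglyMeasurable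
      ((measurable_score τ).comp hW).aestronglyMeasurable hHint hderiv⟩

/-- Gateaux derivative of the pinball risk: for integrable `H` and `P(W = 0) = 0`,
`φ(t) = E[ρ_τ(W − tH) − ρ_τ(W)]` is finite for all `t` and differentiable at `0`
with `φ'(0) = −E[ψ_τ(W) H]`. -/
theorem pinball_risk_gateaux_deriv
    {Ω : Type*} [MeasurableSpace Ω] (μ : Measure Ω) [IsProbabilityMeasure μ]
    (τ : ℝ) (hτ : τ ∈ Set.Ioo (0:ℝ) 1)
    (W H : Ω → ℝ) (hW : Measurable W) (hH : Measurable H)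
    (hHint : Integrable H μ) (hW0 : μ {ω | W ω = 0} = 0) :
    (∀ t : ℝ, Integrable (fun ω => pinball τ (W ω - t * H ω) - pinball τ (W ω)) μ) ∧
    HasDerivAt (fun t : ℝ => ∫ ω, (pinball τ (W ω - t * H ω) - pinball τ (W ω)) ∂μ)
      (-∫ ω, score τ (W ω) * H ω ∂μ) 0 :=
  pinball_risk_gateaux_deriv_general μ τ W H hW hHint hW0
end

section
/- (Neyman orthogonality of the pinball risk at the true quantile) Let τ ∈ (0,1). Let (Ω, 𝓕, P) be a probability space, 𝓖 ⊆ 𝓕 a sub-σ-algebra, Y a real-valued random variable, Q a 𝓖-measurable real-valued random variable, and H a 𝓖-measurable real-valued random variable with E[|H|] < ∞. Suppose E[1{Y ≤ Q} | 𝓖] = τ almost surely and P(Y = Q) = 0. Then the function t ↦ E[ρ_τ(Y − Q − tH) − ρ_τ(Y − Q)] is differentiable at t = 0 with derivative equal to 0. -/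
open MeasureTheory

lemma measurable_pinball (τ : ℝ) : Measurable (pinball τ) := by
  unfold pinball
  exact measurable_id.mul (measurable_const.sub
    (Measurable.ite measurableSet_Iio measurable_const measurable_const))

lemma pinball_lip {τ : ℝ} (h0 : 0 ≤ τ) (h1 : τ ≤ 1) (a b : ℝ) :
    |pinball τ a - pinball τ b| ≤ |a - b| := by
  unfold pinball
  rw [abs_le]
  split_ifs with ha hb hb <;> constructor <;>
    nlinarith [le_abs_self (a - b), neg_abs_le (a - b), abs_nonneg (a - b)]

lemma pinball_hasDerivAt {τ u h : ℝ} (hu : u ≠ 0) :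
    HasDerivAt (fun t : ℝ => pinball τ (u - t * h))
      ((-h) * (τ - if u ≤ 0 then 1 else 0)) 0 := by
  have hc : (if u ≤ 0 then (1:ℝ) else 0) = (if u < 0 then 1 else 0) := by
    rcases lt_or_gt_of_ne hu with h' | h'
    · simp [h'.le, h']
    · simp [not_le.2 h', not_lt.2 h'.le]
  rw [hc]
  have hg : HasDerivAt (fun t : ℝ => (u - t * h) * (τ - if u < 0 then 1 else 0))
      ((-h) * (τ - if u < 0 then 1 else 0)) 0 :=
    ((hasDerivAt_mul_const h).const_sub u).mul_const _
  refine hg.congr_of_eventuallyEq ?_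
  have hev : ∀ᶠ t : ℝ in nhds 0, |t * h| < |u| := by
    have hco : Filter.Tendsto (fun t : ℝ => |t * h|) (nhds 0) (nhds |(0:ℝ) * h|) :=
      ((continuous_id.mul continuous_const).abs.tendsto 0)
    simp only [zero_mul, abs_zero] at hco
    exact hco.eventually_lt_const (abs_pos.2 hu)
  filter_upwards [hev] with t ht
  unfold pinball
  congr 2
  rcases lt_or_gt_of_ne hu with h' | h'
  · have : u - t * h < 0 := by
      have := neg_abs_le (t * h)
      have := abs_of_neg h'
      linarith
    simp [this, h']
  · have : ¬ (u - t * h < 0) := by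
      have := le_abs_self (t * h)
      have := abs_of_pos h'
      push_neg
      linarith
    simp [this, not_lt.2 h'.le]

lemma pinball_aux {Ω : Type*} [mΩ : MeasurableSpace Ω] (μ : Measure Ω) [IsProbabilityMeasure μ]
    {τ : ℝ} (hτ0 : 0 ≤ τ) (hτ1 : τ ≤ 1) (U G : Ω → ℝ)
    (hU : Measurable U) (hG : Measurable G) (hGint : Integrable G μ)
    (hU0 : ∀ᵐ ω ∂μ, U ω ≠ 0) :
    HasDerivAt (fun t : ℝ => ∫ ω, (pinball τ (U ω - t * G ω) - pinball τ (U ω)) ∂μ)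
      (∫ ω, (-(G ω)) * (τ - if U ω ≤ 0 then 1 else 0) ∂μ) 0 := by
  have hmain := hasDerivAt_integral_of_dominated_loc_of_lip
      (𝕜 := ℝ) (μ := μ) (x₀ := 0)
      (F := fun (t : ℝ) ω => pinball τ (U ω - t * G ω) - pinball τ (U ω))
      (F' := fun ω => (-(G ω)) * (τ - if U ω ≤ 0 then 1 else 0))
      (bound := fun ω => |G ω|) (s := Metric.ball 0 1) (Metric.ball_mem_nhds 0 one_pos)
      ?_ ?_ ?_ ?_ ?_ ?_
  · exact hmain.2
  · refine Filter.Eventually.of_forall fun t => ?_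
    exact (((measurable_pinball τ).comp (hU.sub (hG.const_mul t))).sub
      ((measurable_pinball τ).comp hU)).aestronglyMeasurable
  · simp only [zero_mul, sub_zero, sub_self]
    exact integrable_const 0
  · refine Measurable.aestronglyMeasurable ?_
    exact hG.neg.mul (measurable_const.sub
      (Measurable.ite (measurableSet_le hU measurable_const) measurable_const measurable_const))
  · refine Filter.Eventually.of_forall fun ω => ?_
    refine LipschitzOnWith.of_dist_le_mul fun t _ s _ => ?_
    have h1 : dist (pinball τ (U ω - t * G ω) - pinball τ (U ω))
        (pinball τ (U ω - s * G ω) - pinball τ (U ω))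
        = |pinball τ (U ω - t * G ω) - pinball τ (U ω - s * G ω)| := by
      rw [Real.dist_eq, sub_sub_sub_cancel_right]
    rw [h1]
    calc |pinball τ (U ω - t * G ω) - pinball τ (U ω - s * G ω)|
        ≤ |(U ω - t * G ω) - (U ω - s * G ω)| := pinball_lip hτ0 hτ1 _ _
      _ = |G ω| * dist t s := by
          rw [Real.dist_eq,
            show (U ω - t * G ω) - (U ω - s * G ω) = G ω * (s - t) by ring, abs_mul,
            abs_sub_comm s t]
      _ = ↑(Real.nnabs |G ω|) * dist t s := by rw [Real.coe_nnabs, abs_abs]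
  · exact hGint.abs
  · filter_upwards [hU0] with ω hω
    exact (pinball_hasDerivAt (τ := τ) (h := G ω) hω).sub_const (pinball τ (U ω))

/-- Neyman orthogonality of the pinball risk at the true quantile: under the conditional
moment condition `E[1{Y ≤ Q} | 𝓖] = τ` a.s. and `P(Y = Q) = 0`, the perturbed risk
`t ↦ E[ρ_τ(Y − Q − tH) − ρ_τ(Y − Q)]` has derivative `0` at `t = 0`. -/
theorem pinball_risk_neyman_orthogonal
    {Ω : Type*} (𝓖 : MeasurableSpace Ω) {m : MeasurableSpace Ω} (μ : Measure Ω) [IsProbabilityMeasure μ]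
    (τ : ℝ) (hτ : τ ∈ Set.Ioo (0:ℝ) 1)
    (h𝓖 : 𝓖 ≤ m)
    (Y Q H : Ω → ℝ) (hY : Measurable Y)
    (hQ : Measurable[𝓖] Q) (hH : Measurable[𝓖] H) (hHint : Integrable H μ)
    (hcond : μ[(fun ω => if Y ω ≤ Q ω then (1:ℝ) else 0) | 𝓖] =ᵐ[μ] fun _ => τ)
    (hYQ : μ {ω | Y ω = Q ω} = 0) :
    HasDerivAt
      (fun t : ℝ => ∫ ω, (pinball τ (Y ω - Q ω - t * H ω) - pinball τ (Y ω - Q ω)) ∂μ)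
      0 0 := by
  have hQm : Measurable[m] Q := fun s hs => h𝓖 _ (hQ hs)
  have hHm : Measurable[m] H := fun s hs => h𝓖 _ (hH hs)
  have hYm : Measurable[m] Y := hY
  have hae : ∀ᵐ ω ∂μ, Y ω - Q ω ≠ 0 := by
    rw [MeasureTheory.ae_iff]
    simpa [sub_eq_zero] using hYQ
  have hmain := pinball_aux (mΩ := m) μ hτ.1.le hτ.2.le (fun ω => Y ω - Q ω) H
    (hYm.sub hQm) hHm hHint hae
  -- it remains to show the derivative (the integral) is zero
  set ind : Ω → ℝ := fun ω => if Y ω ≤ Q ω then (1:ℝ) else 0 with hind_def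
  have hind_meas : Measurable[m] ind :=
    Measurable.ite (measurableSet_le hYm hQm) measurable_const measurable_const
  have hind_int : Integrable ind μ := by
    refine (integrable_const (1:ℝ)).mono' (hind_meas.aestronglyMeasurable (μ := μ))
      (Filter.Eventually.of_forall fun ω => ?_)
    simp only [hind_def, Real.norm_eq_abs]
    split_ifs <;> simp
  have hHind_int : Integrable (H * ind) μ := by
    refine hHint.abs.mono' ((hHm.mul hind_meas).aestronglyMeasurable (μ := μ))
      (Filter.Eventually.of_forall fun ω => ?_)
    simp only [Pi.mul_apply, Real.norm_eq_abs, abs_mul, hind_def]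
    split_ifs <;> simp [abs_nonneg]
  have hkey : ∫ ω, H ω * ind ω ∂μ = τ * ∫ ω, H ω ∂μ := by
    have h1 : μ[H * ind | 𝓖] =ᵐ[μ] H * μ[ind | 𝓖] :=
      condExp_mul_of_stronglyMeasurable_left hH.stronglyMeasurable hHind_int hind_int
    have h2 : μ[H * ind | 𝓖] =ᵐ[μ] fun ω => H ω * τ := by
      refine h1.trans ?_
      filter_upwards [hcond] with ω hω
      simp only [Pi.mul_apply]
      rw [hω]
    have h3 : ∫ ω, (μ[H * ind | 𝓖]) ω ∂μ = ∫ ω, (H * ind) ω ∂μ := integral_condExp h𝓖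
    have h4 : ∫ ω, (H * ind) ω ∂μ = ∫ ω, H ω * ind ω ∂μ := rfl
    rw [← h4, ← h3, integral_congr_ae h2, integral_mul_const, mul_comm]
  have hzero : ∫ ω, (-(H ω)) * (τ - if Y ω - Q ω ≤ 0 then 1 else 0) ∂μ = 0 := by
    have hre : (fun ω => (-(H ω)) * (τ - if Y ω - Q ω ≤ 0 then 1 else 0))
        = fun ω => H ω * ind ω - τ * H ω := by
      funext ω
      simp only [hind_def, sub_nonpos]
      ring
    have hHind_int' : Integrable (fun ω => H ω * ind ω) μ := hHind_int
    rw [hre, integral_sub hHind_int' (hHint.const_mul τ), hkey, integral_const_mul]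
    ring
  rw [hzero] at hmain
  exact hmain
end

section
/- (Quadratic growth of the pinball risk) Let τ ∈ (0,1) and let U be a real-valued random variable with cumulative distribution function F(s) := P(U ≤ s). Suppose F(0) = τ and that there exist c₀ > 0 and r₀ > 0 such that F(t) − F(s) ≥ c₀(t − s) for all −r₀ ≤ s ≤ t ≤ r₀. Then for every δ with |δ| ≤ r₀, E[ρ_τ(U − δ) − ρ_τ(U)] ≥ (c₀/2)·δ². -/
/-!
Since `ρ_τ(v) = τ v + max (-v) 0` and `s ↦ max (s - u) 0` has right derivative `1{u ≤ s}`,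
`ρ_τ(u - δ) - ρ_τ(u) = ∫₀^δ (1{u ≤ s} - τ) ds`. Taking expectations and swapping the integrals
gives `E[ρ_τ(U - δ) - ρ_τ(U)] = ∫₀^δ (F s - F 0) ds` when `F 0 = τ`, and the growth condition
bounds this below by `∫₀^δ c₀ s ds = c₀ δ² / 2`, for either sign of `δ`.
-/

open MeasureTheory

open Set
open scoped Interval

lemma pinball_eq_mul_add_max (τ v : ℝ) : pinball τ v = τ * v + max (-v) 0 := by
  unfold pinball
  split_ifs with h
  · rw [max_eq_left (by linarith)]; ring
  · rw [max_eq_right (by linarith)]; ring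

lemma hasDerivWithinAt_max_sub_const_zero_Ioi (u x : ℝ) :
    HasDerivWithinAt (fun y => max (y - u) 0) (if u ≤ x then 1 else 0) (Ioi x) x := by
  split_ifs with h
  · refine ((hasDerivAt_id x).sub_const u).hasDerivWithinAt.congr (fun y hy => ?_) ?_
    · exact max_eq_left (sub_nonneg.2 (h.trans (le_of_lt hy)))
    · exact max_eq_left (sub_nonneg.2 h)
  · refine ((hasDerivAt_const x (0 : ℝ)).congr_of_eventuallyEq ?_).hasDerivWithinAt
    filter_upwards [Iio_mem_nhds (not_le.mp h)] with y hy
    exact max_eq_right (sub_nonpos.2 (le_of_lt hy))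

lemma monotone_ite_le (u : ℝ) : Monotone fun s : ℝ => if u ≤ s then (1 : ℝ) else 0 := by
  intro s t hst
  dsimp only
  split_ifs with hs ht <;> first | exact absurd (hs.trans hst) ht | norm_num

lemma integral_ite_le_eq_max_sub_max (u a b : ℝ) :
    ∫ s in a..b, (if u ≤ s then (1 : ℝ) else 0) = max (b - u) 0 - max (a - u) 0 :=
  intervalIntegral.integral_eq_sub_of_hasDeriv_right (by fun_prop)
    (fun x _ => hasDerivWithinAt_max_sub_const_zero_Ioi u x) (monotone_ite_le u).intervalIntegrable

lemma pinball_sub_pinball_eq_integral (τ δ u : ℝ) :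
    pinball τ (u - δ) - pinball τ u = ∫ s in 0..δ, ((if u ≤ s then (1 : ℝ) else 0) - τ) := by
  rw [intervalIntegral.integral_sub (monotone_ite_le u).intervalIntegrable intervalIntegrable_const,
    integral_ite_le_eq_max_sub_max, intervalIntegral.integral_const, pinball_eq_mul_add_max,
    pinball_eq_mul_add_max, neg_sub]
  simp only [zero_sub, smul_eq_mul, sub_zero]
  ring

theorem integral_intervalIntegral_swap {Ω E : Type*} [MeasurableSpace Ω] [NormedAddCommGroup E]
    [NormedSpace ℝ E] {μ : Measure Ω} [SFinite μ] {ν : Measure ℝ} [SFinite ν] {f : Ω → ℝ → E}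
    {a b : ℝ} (hf : Integrable (Function.uncurry f) (μ.prod (ν.restrict (Ι a b)))) :
    ∫ ω, ∫ s in a..b, f ω s ∂ν ∂μ = ∫ s in a..b, ∫ ω, f ω s ∂μ ∂ν := by
  simp_rw [intervalIntegral.intervalIntegral_eq_integral_uIoc]
  rw [integral_smul, integral_integral_swap hf]

theorem integral_pinball_sub_pinball {Ω : Type*} [MeasurableSpace Ω] (μ : Measure Ω)
    [IsProbabilityMeasure μ] (τ : ℝ) {U : Ω → ℝ} (hU : Measurable U) (δ : ℝ) :
    ∫ ω, (pinball τ (U ω - δ) - pinball τ (U ω)) ∂μ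
      = ∫ s in 0..δ, ((μ {ω | U ω ≤ s}).toReal - τ) := by
  have hS : MeasurableSet {p : Ω × ℝ | U p.1 ≤ p.2} :=
    measurableSet_le (hU.comp measurable_fst) measurable_snd
  have : IsFiniteMeasure (volume.restrict (Ι 0 δ)) :=
    inferInstanceAs (IsFiniteMeasure (volume.restrict (Ioc _ _)))
  simp_rw [pinball_sub_pinball_eq_integral]
  rw [integral_intervalIntegral_swap
    (((integrable_const (1 : ℝ)).indicator hS).sub (integrable_const τ))]
  refine intervalIntegral.integral_congr fun s _ => ?_
  have hint : Integrable (fun ω => if U ω ≤ s then (1 : ℝ) else 0) μ :=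
    (integrable_const 1).indicator (hU measurableSet_Iic)
  have hcdf : ∫ ω, (if U ω ≤ s then (1 : ℝ) else 0) ∂μ = (μ {ω | U ω ≤ s}).toReal :=
    integral_indicator_one (hU measurableSet_Iic)
  rw [integral_sub hint (integrable_const τ), hcdf, integral_const, probReal_univ, one_smul]

lemma mul_sq_le_integral_sub_of_growth {f : ℝ → ℝ} (hf : Monotone f) {c r δ : ℝ}
    (hgrow : ∀ s t, -r ≤ s → s ≤ t → t ≤ r → c * (t - s) ≤ f t - f s) (hδ : |δ| ≤ r) :
    c / 2 * δ ^ 2 ≤ ∫ s in 0..δ, (f s - f 0) := by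
  obtain ⟨hrδ, hδr⟩ := abs_le.mp hδ
  have hint : IntervalIntegrable (fun s => f s - f 0) volume 0 δ :=
    hf.intervalIntegrable.sub intervalIntegrable_const
  have hlin : IntervalIntegrable (fun s => c * s) volume 0 δ :=
    (continuous_const.mul continuous_id).intervalIntegrable 0 δ
  have hquad : ∫ s in 0..δ, c * s = c / 2 * δ ^ 2 := by
    rw [intervalIntegral.integral_const_mul, integral_id]; ring
  rw [← hquad]
  rcases le_total 0 δ with h | h
  · refine intervalIntegral.integral_mono_on h hlin hint fun s hs => ?_
    have := hgrow 0 s (by linarith) hs.1 (by linarith [hs.2])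
    linarith
  · rw [intervalIntegral.integral_symm δ 0, intervalIntegral.integral_symm δ 0, neg_le_neg_iff]
    refine intervalIntegral.integral_mono_on h hint.symm hlin.symm fun s hs => ?_
    have := hgrow s 0 (by linarith [hs.1]) hs.2 (by linarith)
    linarith

theorem pinball_risk_quadratic_growth_general
    {Ω : Type*} [MeasurableSpace Ω] (μ : Measure Ω) [IsProbabilityMeasure μ]
    (τ : ℝ)
    (U : Ω → ℝ) (hU : Measurable U)
    (c₀ r₀ : ℝ)
    (hF0 : (μ {ω | U ω ≤ 0}).toReal = τ)
    (hgrow : ∀ s t : ℝ, -r₀ ≤ s → s ≤ t → t ≤ r₀ →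
      c₀ * (t - s) ≤ (μ {ω | U ω ≤ t}).toReal - (μ {ω | U ω ≤ s}).toReal) :
    ∀ δ : ℝ, |δ| ≤ r₀ →
      (c₀ / 2) * δ ^ 2 ≤ ∫ ω, (pinball τ (U ω - δ) - pinball τ (U ω)) ∂μ := by
  intro δ hδ
  have hF_mono : Monotone fun s => (μ {ω | U ω ≤ s}).toReal := fun s t hst =>
    ENNReal.toReal_mono (measure_ne_top μ _) (measure_mono fun _ hω => le_trans hω hst)
  rw [integral_pinball_sub_pinball μ τ hU δ, ← hF0]
  exact mul_sq_le_integral_sub_of_growth hF_mono hgrow hδ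

/-- Quadratic growth of the pinball risk: if `F(0) = τ` and the CDF `F` of `U` grows at
rate at least `c₀` on `[−r₀, r₀]`, then `E[ρ_τ(U − δ) − ρ_τ(U)] ≥ (c₀/2) δ²` for `|δ| ≤ r₀`. -/
theorem pinball_risk_quadratic_growth
    {Ω : Type*} [MeasurableSpace Ω] (μ : Measure Ω) [IsProbabilityMeasure μ]
    (τ : ℝ) (hτ : τ ∈ Set.Ioo (0:ℝ) 1)
    (U : Ω → ℝ) (hU : Measurable U)
    (c₀ r₀ : ℝ) (hc₀ : 0 < c₀) (hr₀ : 0 < r₀)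
    (hF0 : (μ {ω | U ω ≤ 0}).toReal = τ)
    (hgrow : ∀ s t : ℝ, -r₀ ≤ s → s ≤ t → t ≤ r₀ →
      c₀ * (t - s) ≤ (μ {ω | U ω ≤ t}).toReal - (μ {ω | U ω ≤ s}).toReal) :
    ∀ δ : ℝ, |δ| ≤ r₀ →
      (c₀ / 2) * δ ^ 2 ≤ ∫ ω, (pinball τ (U ω - δ) - pinball τ (U ω)) ∂μ :=
  pinball_risk_quadratic_growth_general μ τ U hU c₀ r₀ hF0 hgrow
end
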